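/- Let the activation be the SoftPlus function SoftPlus_β(x) = (1/β)·log(1 + exp(βx)) for some β > 0. Then for every λ > B_x²·‖a‖₂²/2, the regularized logistic empirical risk L̃ built with σ = SoftPlus_β is a Villani function on ℝ^{p×d}: it is C^∞, L̃(W) → +∞ as ‖W‖_F → ∞, ∫ exp(−2L̃(W)/s) dW < ∞ for every s > 0, and −ΔL̃(W) + (1/s)·‖∇L̃(W)‖² → +∞ as ‖W‖_F → ∞ for every s > 0 — even though SoftPlus_β is unbounded. -/

import Mathlib

open MeasureTheory Real Filter

noncomputable section

/-- The `j`-th row of a weight matrix `W ∈ ℝ^{p×d}` (Frobenius/Euclidean structure). -/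
def row {p d : ℕ} (W : EuclideanSpace ℝ (Fin p × Fin d)) (j : Fin p) :
    EuclideanSpace ℝ (Fin d) :=
  WithLp.toLp 2 (fun k => W (j, k))

/-- Replace the `j`-th row of `W` by `v`. -/
def updRow {p d : ℕ} (W : EuclideanSpace ℝ (Fin p × Fin d)) (j : Fin p)
    (v : EuclideanSpace ℝ (Fin d)) : EuclideanSpace ℝ (Fin p × Fin d) :=
  WithLp.toLp 2 (fun q => if q.1 = j then v q.2 else W q)

/-- The depth-2 network `f(x; a, W) = ∑ⱼ aⱼ σ(⟨wⱼ, x⟩)`. -/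
def net {p d : ℕ} (σ : ℝ → ℝ) (a : EuclideanSpace ℝ (Fin p))
    (W : EuclideanSpace ℝ (Fin p × Fin d)) (x : EuclideanSpace ℝ (Fin d)) : ℝ :=
  ∑ j, a j * σ (inner ℝ (row W j) x : ℝ)

/-- The regularized logistic empirical risk. -/
def risk {p d n : ℕ} (σ : ℝ → ℝ) (a : EuclideanSpace ℝ (Fin p))
    (x : Fin n → EuclideanSpace ℝ (Fin d)) (y : Fin n → ℝ) (lam : ℝ)
    (W : EuclideanSpace ℝ (Fin p × Fin d)) : ℝ :=
  (1 / (n : ℝ)) * ∑ i, Real.log (1 + Real.exp (-(y i) * net σ a W (x i)))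
    + (lam / 2) * ‖W‖ ^ 2

/-- The second partial derivative of `g` in coordinate `q`. -/
def secondPartial {m : Type*} [Fintype m] [DecidableEq m]
    (g : EuclideanSpace ℝ m → ℝ) (W : EuclideanSpace ℝ m) (q : m) : ℝ :=
  fderiv ℝ (fun W' => fderiv ℝ g W' (EuclideanSpace.single q 1)) W
    (EuclideanSpace.single q 1)

/-- The Laplacian of `g`: sum of all second partial derivatives. -/
def lap {m : Type*} [Fintype m] [DecidableEq m]
    (g : EuclideanSpace ℝ m → ℝ) (W : EuclideanSpace ℝ m) : ℝ :=
  ∑ q, secondPartial g W q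

/-- The partial Laplacian of `g` in the coordinates of row `j`. -/
def rowLap {p d : ℕ} (g : EuclideanSpace ℝ (Fin p × Fin d) → ℝ)
    (W : EuclideanSpace ℝ (Fin p × Fin d)) (j : Fin p) : ℝ :=
  ∑ k, secondPartial g W (j, k)

/-- The gradient of `g` with respect to the row `wⱼ`, all other rows held fixed. -/
def gradRow {p d : ℕ} (g : EuclideanSpace ℝ (Fin p × Fin d) → ℝ)
    (W : EuclideanSpace ℝ (Fin p × Fin d)) (j : Fin p) : EuclideanSpace ℝ (Fin d) :=
  gradient (fun v => g (updRow W j v)) (row W j)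

/-- The Gibbs measure with density `(1/Z_s) exp(-2 g(W)/s)` w.r.t. Lebesgue measure. -/
def gibbs {m : Type*} [Fintype m] (g : EuclideanSpace ℝ m → ℝ) (s : ℝ) :
    Measure (EuclideanSpace ℝ m) :=
  volume.withDensity fun W =>
    ENNReal.ofReal ((∫ W', Real.exp (-2 * g W' / s))⁻¹ * Real.exp (-2 * g W / s))

end

-- ===== auxiliary development =====

noncomputable def ℓf (t : ℝ) : ℝ := Real.log (1 + Real.exp t)
noncomputable def Sf (t : ℝ) : ℝ := Real.exp t / (1 + Real.exp t)

lemma one_add_exp_pos (t : ℝ) : 0 < 1 + Real.exp t := by positivity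

lemma Sf_nonneg (t : ℝ) : 0 ≤ Sf t :=
  div_nonneg (Real.exp_pos t).le (one_add_exp_pos t).le

lemma Sf_le_one (t : ℝ) : Sf t ≤ 1 := by
  rw [Sf, div_le_one (one_add_exp_pos t)]; linarith [Real.exp_pos t]

lemma abs_Sf_le_one (t : ℝ) : |Sf t| ≤ 1 := by
  rw [abs_le]; exact ⟨by linarith [Sf_nonneg t], Sf_le_one t⟩

lemma abs_Sf_deriv_le_one (t : ℝ) : |Sf t * (1 - Sf t)| ≤ 1 := by
  have h1 := Sf_nonneg t; have h2 := Sf_le_one t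
  rw [abs_le]; constructor <;> nlinarith

lemma hasDerivAt_ℓf (t : ℝ) : HasDerivAt ℓf (Sf t) t := by
  have h : HasDerivAt (fun t => 1 + Real.exp t) (Real.exp t) t :=
    (Real.hasDerivAt_exp t).const_add 1
  exact h.log (one_add_exp_pos t).ne'

lemma hasDerivAt_Sf (t : ℝ) : HasDerivAt Sf (Sf t * (1 - Sf t)) t := by
  have h : HasDerivAt (fun t => 1 + Real.exp t) (Real.exp t) t :=
    (Real.hasDerivAt_exp t).const_add 1
  have := (Real.hasDerivAt_exp t).div h (one_add_exp_pos t).ne'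
  refine this.congr_deriv ?_
  have h0 := (one_add_exp_pos t).ne'
  rw [Sf]
  field_simp

noncomputable def linT {p d : ℕ} (x : EuclideanSpace ℝ (Fin d)) (j : Fin p) :
    EuclideanSpace ℝ (Fin p × Fin d) →L[ℝ] ℝ :=
  ∑ k, x k • EuclideanSpace.proj (j, k)

lemma linT_apply {p d : ℕ} (x : EuclideanSpace ℝ (Fin d)) (j : Fin p)
    (W : EuclideanSpace ℝ (Fin p × Fin d)) :
    linT x j W = ∑ k, x k * W (j, k) := by
  simp [linT, ContinuousLinearMap.sum_apply]

lemma linT_eq_inner {p d : ℕ} (x : EuclideanSpace ℝ (Fin d)) (j : Fin p)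
    (W : EuclideanSpace ℝ (Fin p × Fin d)) :
    (inner ℝ (row W j) x : ℝ) = linT x j W := by
  rw [linT_apply]
  simp [row, PiLp.inner_apply, RCLike.inner_apply, mul_comm]

lemma linT_single {p d : ℕ} (xx : EuclideanSpace ℝ (Fin d)) (j : Fin p) (q : Fin p × Fin d) :
    linT xx j (EuclideanSpace.single q 1) = if j = q.1 then xx q.2 else 0 := by
  simp only [linT, ContinuousLinearMap.sum_apply, ContinuousLinearMap.smul_apply,
    PiLp.proj_apply, EuclideanSpace.single_apply, smul_eq_mul, Prod.ext_iff,
    mul_ite, mul_one, mul_zero]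
  by_cases h : j = q.1
  · subst h
    simp [Finset.sum_ite_eq']
  · simp [h]

lemma euclid_norm_le {m : Type*} [Fintype m] (u v : EuclideanSpace ℝ m)
    (h : ∀ q, |u q| ≤ v q) : ‖u‖ ≤ ‖v‖ := by
  rw [EuclideanSpace.norm_eq, EuclideanSpace.norm_eq]
  apply Real.sqrt_le_sqrt
  apply Finset.sum_le_sum
  intro q _
  have := h q
  rw [Real.norm_eq_abs, Real.norm_eq_abs]
  have h0 : 0 ≤ |u q| := abs_nonneg _
  nlinarith [abs_nonneg (v q), le_abs_self (v q)]

lemma gradient_coord {m : Type*} [Fintype m] [DecidableEq m]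
    (f : EuclideanSpace ℝ m → ℝ) (W : EuclideanSpace ℝ m) (q : m) :
    gradient f W q = fderiv ℝ f W (EuclideanSpace.single q 1) := by
  have h := InnerProductSpace.toDual_symm_apply (𝕜 := ℝ) (E := EuclideanSpace ℝ m)
    (y := fderiv ℝ f W) (x := EuclideanSpace.single q 1)
  rw [← h]
  unfold gradient
  simp only [PiLp.inner_apply, RCLike.inner_apply, conj_trivial,
    EuclideanSpace.single_apply, mul_ite, mul_one, mul_zero, ite_mul, one_mul, zero_mul]
  rw [Finset.sum_ite_eq' Finset.univ q]
  simp

lemma integrable_gauss {m : Type*} [Fintype m] (b : ℝ) (hb : 0 < b) :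
    MeasureTheory.Integrable
      (fun v : EuclideanSpace ℝ m => Real.exp (-b * ‖v‖^2)) MeasureTheory.volume := by
  have h := (GaussianFourier.integrable_cexp_neg_mul_sq_norm_add_of_euclideanSpace
      (ι := m) (b := (b:ℂ)) (by simpa using hb) 0 0).norm
  have heq : (fun v : EuclideanSpace ℝ m => Real.exp (-b * ‖v‖^2))
      = fun v : EuclideanSpace ℝ m => ‖Complex.exp (-(b:ℂ) * (‖v‖:ℂ)^2
          + 0 * ((inner ℝ (0:EuclideanSpace ℝ m) v : ℝ) : ℂ))‖ := by
    funext v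
    rw [Complex.norm_exp]
    norm_num
    left
    rw [← Complex.ofReal_pow, Complex.ofReal_re]
  rw [heq]
  exact h

section core
variable {p d n : ℕ} (β : ℝ) (a : EuclideanSpace ℝ (Fin p))
  (x : Fin n → EuclideanSpace ℝ (Fin d)) (y : Fin n → ℝ)

noncomputable def Ff (i : Fin n) (W : EuclideanSpace ℝ (Fin p × Fin d)) : ℝ :=
  ∑ j, (-(y i) * a j * (1/β)) * ℓf (β * linT (x i) j W)

lemma riskEq (lam : ℝ) :
    risk (fun t => (1 / β) * Real.log (1 + Real.exp (β * t))) a x y lam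
      = fun W => (1/(n:ℝ)) * ∑ i, ℓf (Ff β a x y i W) + (lam/2) * ∑ q, (W q)^2 := by
  funext W
  have hnorm : ‖W‖^2 = ∑ q, (W q)^2 := by
    rw [EuclideanSpace.norm_eq, Real.sq_sqrt (by positivity)]
    congr 1; funext q; rw [Real.norm_eq_abs, sq_abs]
  have hterm : ∀ i, Real.log (1 + Real.exp
      (-(y i) * net (fun t => (1 / β) * Real.log (1 + Real.exp (β * t))) a W (x i)))
      = ℓf (Ff β a x y i W) := by
    intro i
    have : -(y i) * net (fun t => (1 / β) * Real.log (1 + Real.exp (β * t))) a W (x i)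
        = Ff β a x y i W := by
      rw [net, Finset.mul_sum, Ff]
      apply Finset.sum_congr rfl
      intro j _
      rw [linT_eq_inner]
      simp only [ℓf]
      ring
    rw [this, ℓf]
  rw [risk, hnorm]
  simp only [hterm]

noncomputable def DF (i : Fin n) (W : EuclideanSpace ℝ (Fin p × Fin d)) :
    EuclideanSpace ℝ (Fin p × Fin d) →L[ℝ] ℝ :=
  ∑ j, (-(y i) * a j * Sf (β * linT (x i) j W)) • linT (x i) j

lemma hasFDerivAt_lin (xx : EuclideanSpace ℝ (Fin d)) (j : Fin p)
    (W : EuclideanSpace ℝ (Fin p × Fin d)) :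
    HasFDerivAt (fun W' => β * linT xx j W') (β • linT xx j) W :=
  ((linT xx j).hasFDerivAt).const_mul β

lemma hasFDerivAt_Ff (hβ : β ≠ 0) (i : Fin n) (W : EuclideanSpace ℝ (Fin p × Fin d)) :
    HasFDerivAt (Ff β a x y i) (DF β a x y i W) W := by
  have h : ∀ j : Fin p, HasFDerivAt
      (fun W' => (-(y i) * a j * (1/β)) * ℓf (β * linT (x i) j W'))
      ((-(y i) * a j * Sf (β * linT (x i) j W)) • linT (x i) j) W := by
    intro j
    have h1 := (hasDerivAt_ℓf (β * linT (x i) j W)).comp_hasFDerivAt W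
      (hasFDerivAt_lin β (x i) j W)
    have h2 := h1.const_mul (-(y i) * a j * (1/β))
    refine h2.congr_fderiv ?_
    rw [smul_smul, smul_smul]
    congr 1
    field_simp
  exact HasFDerivAt.fun_sum (fun j _ => h j)

lemma DF_single (i : Fin n) (W : EuclideanSpace ℝ (Fin p × Fin d)) (q : Fin p × Fin d) :
    DF β a x y i W (EuclideanSpace.single q 1)
      = (-(y i) * a q.1 * Sf (β * linT (x i) q.1 W)) * x i q.2 := by
  simp only [DF, ContinuousLinearMap.sum_apply, ContinuousLinearMap.smul_apply, linT_single,
    smul_eq_mul, mul_ite, mul_zero]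
  rw [Finset.sum_ite_eq' Finset.univ q.1]
  simp

noncomputable def Qlin {p d : ℕ} (W : EuclideanSpace ℝ (Fin p × Fin d)) :
    EuclideanSpace ℝ (Fin p × Fin d) →L[ℝ] ℝ :=
  ∑ q, W q • EuclideanSpace.proj q

lemma Qlin_single {p d : ℕ} (W : EuclideanSpace ℝ (Fin p × Fin d)) (q : Fin p × Fin d) :
    Qlin W (EuclideanSpace.single q 1) = W q := by
  simp only [Qlin, ContinuousLinearMap.sum_apply, ContinuousLinearMap.smul_apply,
    PiLp.proj_apply, EuclideanSpace.single_apply, smul_eq_mul, mul_ite, mul_one, mul_zero]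
  rw [Finset.sum_ite_eq' Finset.univ q]
  simp

lemma hasFDerivAt_sumsq {p d : ℕ} (W : EuclideanSpace ℝ (Fin p × Fin d)) :
    HasFDerivAt (fun W' : EuclideanSpace ℝ (Fin p × Fin d) => ∑ q, (W' q)^2)
      ((2:ℝ) • Qlin W) W := by
  have h : ∀ q ∈ Finset.univ, HasFDerivAt
      (fun W' : EuclideanSpace ℝ (Fin p × Fin d) => (W' q)^2)
      ((2 * W q) • (EuclideanSpace.proj q : EuclideanSpace ℝ (Fin p × Fin d) →L[ℝ] ℝ)) W := by
    intro q _
    have h0 := ((EuclideanSpace.proj q :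
        EuclideanSpace ℝ (Fin p × Fin d) →L[ℝ] ℝ).hasFDerivAt (x := W)).fun_mul
      ((EuclideanSpace.proj q :
        EuclideanSpace ℝ (Fin p × Fin d) →L[ℝ] ℝ).hasFDerivAt (x := W))
    simp only [PiLp.proj_apply] at h0
    have : (2 * W q) • (EuclideanSpace.proj q :
        EuclideanSpace ℝ (Fin p × Fin d) →L[ℝ] ℝ)
        = W q • EuclideanSpace.proj q + W q • EuclideanSpace.proj q := by
      rw [← add_smul]; ring_nf
    rw [this]
    simpa [pow_two] using h0
  have := HasFDerivAt.fun_sum h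
  refine this.congr_fderiv ?_
  rw [Qlin, Finset.smul_sum]
  apply Finset.sum_congr rfl
  intro q _
  rw [smul_smul]

noncomputable def DR (lam : ℝ) (W : EuclideanSpace ℝ (Fin p × Fin d)) :
    EuclideanSpace ℝ (Fin p × Fin d) →L[ℝ] ℝ :=
  (1/(n:ℝ)) • (∑ i, Sf (Ff β a x y i W) • DF β a x y i W) + lam • Qlin W

lemma hasFDerivAt_risk (hβ : β ≠ 0) (lam : ℝ) (W : EuclideanSpace ℝ (Fin p × Fin d)) :
    HasFDerivAt (risk (fun t => (1 / β) * Real.log (1 + Real.exp (β * t))) a x y lam)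
      (DR β a x y lam W) W := by
  rw [riskEq β a x y lam]
  have h1 : ∀ i ∈ Finset.univ, HasFDerivAt (fun W' => ℓf (Ff β a x y i W'))
      (Sf (Ff β a x y i W) • DF β a x y i W) W :=
    fun i _ => (hasDerivAt_ℓf _).comp_hasFDerivAt W (hasFDerivAt_Ff β a x y hβ i W)
  have h2 := (HasFDerivAt.fun_sum h1).const_mul (1/(n:ℝ))
  have h3 := (hasFDerivAt_sumsq W).const_mul (lam/2)
  have h4 := h2.fun_add h3
  refine h4.congr_fderiv ?_
  rw [DR]
  congr 1
  rw [smul_smul]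
  congr 1
  ring

noncomputable def Ψ (q : Fin p × Fin d) (W : EuclideanSpace ℝ (Fin p × Fin d)) : ℝ :=
  (1/(n:ℝ)) * ∑ i, Sf (Ff β a x y i W) *
    ((-(y i) * a q.1 * Sf (β * linT (x i) q.1 W)) * x i q.2)

lemma fderiv_risk_apply (hβ : β ≠ 0) (lam : ℝ) (W : EuclideanSpace ℝ (Fin p × Fin d))
    (q : Fin p × Fin d) :
    fderiv ℝ (risk (fun t => (1 / β) * Real.log (1 + Real.exp (β * t))) a x y lam) W
        (EuclideanSpace.single q 1)
      = Ψ β a x y q W + lam * W q := by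
  rw [(hasFDerivAt_risk β a x y hβ lam W).fderiv]
  simp only [DR, ContinuousLinearMap.add_apply, ContinuousLinearMap.smul_apply,
    ContinuousLinearMap.sum_apply, DF_single, Qlin_single, smul_eq_mul, Ψ,
    Finset.mul_sum]

noncomputable def Ψ2 (q : Fin p × Fin d) (W : EuclideanSpace ℝ (Fin p × Fin d)) : ℝ :=
  (1/(n:ℝ)) * ∑ i,
    (Sf (Ff β a x y i W) * (Sf (β * linT (x i) q.1 W) * (1 - Sf (β * linT (x i) q.1 W)))
        * (β * x i q.2 * x i q.2) * (-(y i) * a q.1)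
      + (Sf (Ff β a x y i W) * (1 - Sf (Ff β a x y i W))) * (Sf (β * linT (x i) q.1 W))^2
        * (y i * a q.1 * x i q.2)^2)

lemma secondPartial_risk (hβ : β ≠ 0) (lam : ℝ) (W : EuclideanSpace ℝ (Fin p × Fin d))
    (q : Fin p × Fin d) :
    secondPartial (risk (fun t => (1 / β) * Real.log (1 + Real.exp (β * t))) a x y lam) W q
      = Ψ2 β a x y q W + lam := by
  rw [secondPartial]
  have hfun : (fun W' => fderiv ℝ
      (risk (fun t => (1 / β) * Real.log (1 + Real.exp (β * t))) a x y lam) W'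
      (EuclideanSpace.single q 1)) = fun W' => Ψ β a x y q W' + lam * W' q := by
    funext W'
    exact fderiv_risk_apply β a x y hβ lam W' q
  rw [hfun]
  have hterm : ∀ i : Fin n, HasFDerivAt
      (fun W' => Sf (Ff β a x y i W') *
        ((-(y i) * a q.1 * Sf (β * linT (x i) q.1 W')) * x i q.2))
      (Sf (Ff β a x y i W) •
          ((x i q.2) • ((-(y i) * a q.1) •
            ((Sf (β * linT (x i) q.1 W) * (1 - Sf (β * linT (x i) q.1 W))) •
              (β • linT (x i) q.1))))
        + ((-(y i) * a q.1 * Sf (β * linT (x i) q.1 W)) * x i q.2) •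
          ((Sf (Ff β a x y i W) * (1 - Sf (Ff β a x y i W))) • DF β a x y i W)) W := by
    intro i
    have hA : HasFDerivAt (fun W' => Sf (Ff β a x y i W'))
        ((Sf (Ff β a x y i W) * (1 - Sf (Ff β a x y i W))) • DF β a x y i W) W :=
      (hasDerivAt_Sf _).comp_hasFDerivAt W (hasFDerivAt_Ff β a x y hβ i W)
    have hv : HasFDerivAt (fun W' => Sf (β * linT (x i) q.1 W'))
        ((Sf (β * linT (x i) q.1 W) * (1 - Sf (β * linT (x i) q.1 W))) •
          (β • linT (x i) q.1)) W :=
      (hasDerivAt_Sf _).comp_hasFDerivAt W (hasFDerivAt_lin β (x i) q.1 W)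
    have hB := (hv.const_mul (-(y i) * a q.1)).mul_const (x i q.2)
    exact hA.fun_mul hB
  have hΨ := (HasFDerivAt.fun_sum (fun i (_ : i ∈ Finset.univ) => hterm i)).const_mul (1/(n:ℝ))
  have hLin : HasFDerivAt (fun W' : EuclideanSpace ℝ (Fin p × Fin d) => lam * W' q)
      (lam • (EuclideanSpace.proj q : EuclideanSpace ℝ (Fin p × Fin d) →L[ℝ] ℝ)) W :=
    ((EuclideanSpace.proj q :
      EuclideanSpace ℝ (Fin p × Fin d) →L[ℝ] ℝ).hasFDerivAt (x := W)).const_mul lam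
  have htot := hΨ.fun_add hLin
  have : (fun W' => Ψ β a x y q W' + lam * W' q)
      = fun W' => (1/(n:ℝ)) * ∑ i, Sf (Ff β a x y i W') *
          ((-(y i) * a q.1 * Sf (β * linT (x i) q.1 W')) * x i q.2) + lam * W' q := by
    funext W'; rw [Ψ]
  rw [this, htot.fderiv]
  simp only [ContinuousLinearMap.add_apply, ContinuousLinearMap.smul_apply,
    ContinuousLinearMap.sum_apply, DF_single, linT_single, PiLp.proj_apply,
    EuclideanSpace.single_apply, smul_eq_mul, Ψ2, eq_self_iff_true, if_true]
  rw [Finset.mul_sum, Finset.mul_sum]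
  congr 1
  · apply Finset.sum_congr rfl
    intro i _
    ring
  · simp

lemma abs_Ψ2_le (hβpos : 0 < β) (hy : ∀ i, |y i| = 1) (q : Fin p × Fin d)
    (W : EuclideanSpace ℝ (Fin p × Fin d)) :
    |Ψ2 β a x y q W|
      ≤ (1/(n:ℝ)) * ∑ i, (β * (x i q.2)^2 * |a q.1| + (a q.1)^2 * (x i q.2)^2) := by
  rw [Ψ2, abs_mul, abs_of_nonneg (show (0:ℝ) ≤ 1/(n:ℝ) by positivity)]
  apply mul_le_mul_of_nonneg_left _ (by positivity)
  refine (Finset.abs_sum_le_sum_abs _ _).trans (Finset.sum_le_sum ?_)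
  intro i _
  refine (abs_add_le _ _).trans (add_le_add ?_ ?_)
  · have e1 : |β * x i q.2 * x i q.2| = β * (x i q.2)^2 := by
      rw [mul_assoc, abs_mul, abs_of_pos hβpos, abs_mul_self, pow_two]
    have e2 : |(-(y i) * a q.1)| = |a q.1| := by
      rw [abs_mul, abs_neg, hy i, one_mul]
    rw [abs_mul, abs_mul, abs_mul, e1, e2]
    calc |Sf (Ff β a x y i W)| * |Sf (β * linT (x i) q.1 W) * (1 - Sf (β * linT (x i) q.1 W))|
          * (β * (x i q.2)^2) * |a q.1|
        ≤ 1 * 1 * (β * (x i q.2)^2) * |a q.1| := by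
          gcongr
          · exact abs_Sf_le_one _
          · exact abs_Sf_deriv_le_one _
      _ = β * (x i q.2)^2 * |a q.1| := by ring
  · have e3 : |(y i * a q.1 * x i q.2)^2| = (a q.1)^2 * (x i q.2)^2 := by
      rw [abs_of_nonneg (sq_nonneg _)]
      have : (y i)^2 = 1 := by rw [← sq_abs, hy i, one_pow]
      nlinarith [this]
    have e4 : |(Sf (β * linT (x i) q.1 W))^2| ≤ 1 := by
      rw [abs_of_nonneg (sq_nonneg _)]
      nlinarith [Sf_nonneg (β * linT (x i) q.1 W), Sf_le_one (β * linT (x i) q.1 W)]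
    rw [abs_mul, abs_mul, e3]
    calc |Sf (Ff β a x y i W) * (1 - Sf (Ff β a x y i W))| * |(Sf (β * linT (x i) q.1 W))^2|
          * ((a q.1)^2 * (x i q.2)^2)
        ≤ 1 * 1 * ((a q.1)^2 * (x i q.2)^2) := by
          gcongr
          exact abs_Sf_deriv_le_one _
      _ = (a q.1)^2 * (x i q.2)^2 := by ring

lemma abs_Ψ_le (hy : ∀ i, |y i| = 1) (q : Fin p × Fin d)
    (W : EuclideanSpace ℝ (Fin p × Fin d)) :
    |Ψ β a x y q W| ≤ (1/(n:ℝ)) * ∑ i, |a q.1| * |x i q.2| := by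
  rw [Ψ, abs_mul, abs_of_nonneg (show (0:ℝ) ≤ 1/(n:ℝ) by positivity)]
  apply mul_le_mul_of_nonneg_left _ (by positivity)
  refine (Finset.abs_sum_le_sum_abs _ _).trans (Finset.sum_le_sum ?_)
  intro i _
  have e2 : |(-(y i) * a q.1 * Sf (β * linT (x i) q.1 W))|
      = |a q.1| * |Sf (β * linT (x i) q.1 W)| := by
    rw [abs_mul, abs_mul, abs_neg, hy i, one_mul]
  rw [abs_mul, abs_mul, e2]
  calc |Sf (Ff β a x y i W)| * (|a q.1| * |Sf (β * linT (x i) q.1 W)| * |x i q.2|)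
      ≤ 1 * (|a q.1| * 1 * |x i q.2|) := by
        gcongr <;> exact abs_Sf_le_one _
    _ = |a q.1| * |x i q.2| := by ring

lemma contDiff_risk (lam : ℝ) :
    ContDiff ℝ (⊤ : ℕ∞) (risk (fun t => (1 / β) * Real.log (1 + Real.exp (β * t))) a x y lam) := by
  rw [riskEq β a x y lam]
  have hℓ : ContDiff ℝ (⊤ : ℕ∞) ℓf := by
    apply ContDiff.log
    · exact contDiff_const.add Real.contDiff_exp
    · exact fun t => (one_add_exp_pos t).ne'
  apply ContDiff.add
  · apply ContDiff.mul contDiff_const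
    apply ContDiff.sum
    intro i _
    apply hℓ.comp
    apply ContDiff.sum
    intro j _
    apply ContDiff.mul contDiff_const
    exact hℓ.comp (contDiff_const.mul (linT (x i) j).contDiff)
  · apply ContDiff.mul contDiff_const
    apply ContDiff.sum
    intro q _
    exact ((EuclideanSpace.proj q :
      EuclideanSpace ℝ (Fin p × Fin d) →L[ℝ] ℝ).contDiff).pow 2

lemma risk_lb (lam : ℝ) (σ : ℝ → ℝ) (W : EuclideanSpace ℝ (Fin p × Fin d)) :
    (lam/2) * ‖W‖^2 ≤ risk σ a x y lam W := by
  rw [risk]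
  have h : 0 ≤ (1 / (n:ℝ)) * ∑ i, Real.log (1 + Real.exp (-(y i) * net σ a W (x i))) := by
    apply mul_nonneg (by positivity)
    apply Finset.sum_nonneg
    intro i _
    apply Real.log_nonneg
    linarith [Real.exp_pos (-(y i) * net σ a W (x i))]
  linarith

lemma gradient_risk (hβ : β ≠ 0) (lam : ℝ) (W : EuclideanSpace ℝ (Fin p × Fin d)) :
    gradient (risk (fun t => (1 / β) * Real.log (1 + Real.exp (β * t))) a x y lam) W
      = (show EuclideanSpace ℝ (Fin p × Fin d) from WithLp.toLp 2 (fun q => Ψ β a x y q W)) + lam • W := by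
  ext q
  rw [gradient_coord, fderiv_risk_apply β a x y hβ lam W q]
  rfl

end core

/-- With the SoftPlus activation `SoftPlus_β(x) = (1/β) log(1 + exp(βx))`, `β > 0`, for
every `λ > B_x² ‖a‖²/2` the regularized logistic empirical risk is a Villani function:
it is `C^∞`, coercive, `exp(−2L̃/s)` is integrable for every `s > 0`, and
`−ΔL̃(W) + (1/s)‖∇L̃(W)‖² → +∞` as `‖W‖_F → ∞` for every `s > 0`. -/
theorem softplus_risk_is_villani {p d n : ℕ} (hn : 0 < n) (β : ℝ) (hβ : 0 < β)
    (Bx lam : ℝ)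
    (a : EuclideanSpace ℝ (Fin p))
    (x : Fin n → EuclideanSpace ℝ (Fin d)) (y : Fin n → ℝ)
    (hx : ∀ i, ‖x i‖ ≤ Bx) (hBx : 0 ≤ Bx) (hy : ∀ i, y i = 1 ∨ y i = -1)
    (hlam : lam > Bx ^ 2 * ‖a‖ ^ 2 / 2) :
    ContDiff ℝ (⊤ : ℕ∞)
      (risk (fun t => (1 / β) * Real.log (1 + Real.exp (β * t))) a x y lam) ∧
    Filter.Tendsto
      (risk (fun t => (1 / β) * Real.log (1 + Real.exp (β * t))) a x y lam)
      (Filter.comap norm Filter.atTop) Filter.atTop ∧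
    (∀ s : ℝ, 0 < s →
      MeasureTheory.Integrable
        (fun W : EuclideanSpace ℝ (Fin p × Fin d) =>
          Real.exp
            (-2 * risk (fun t => (1 / β) * Real.log (1 + Real.exp (β * t))) a x y lam W
              / s))
        MeasureTheory.volume) ∧
    (∀ s : ℝ, 0 < s →
      Filter.Tendsto
        (fun W : EuclideanSpace ℝ (Fin p × Fin d) =>
          -lap (risk (fun t => (1 / β) * Real.log (1 + Real.exp (β * t))) a x y lam) W +
            (1 / s) *
              ‖gradient
                  (risk (fun t => (1 / β) * Real.log (1 + Real.exp (β * t))) a x y lam)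
                  W‖ ^ 2)
        (Filter.comap norm Filter.atTop) Filter.atTop) := by
  have hβ' : β ≠ 0 := hβ.ne'
  have hy' : ∀ i, |y i| = 1 := fun i => by rcases hy i with h | h <;> simp [h]
  have hlam0 : 0 < lam := lt_of_le_of_lt (by positivity) hlam
  refine ⟨contDiff_risk β a x y lam, ?_, ?_, ?_⟩
  · -- coercivity
    have htend : Filter.Tendsto (fun W : EuclideanSpace ℝ (Fin p × Fin d) =>
        (lam/2) * ‖W‖^2) (Filter.comap norm Filter.atTop) Filter.atTop := by
      have h1 : Filter.Tendsto (fun t : ℝ => (lam/2) * t^2) Filter.atTop Filter.atTop :=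
        Filter.Tendsto.const_mul_atTop (by positivity) (tendsto_pow_atTop two_ne_zero)
      exact h1.comp tendsto_comap
    exact tendsto_atTop_mono (fun W => risk_lb a x y lam _ W) htend
  · -- integrability
    intro s hs
    refine MeasureTheory.Integrable.mono'
      (integrable_gauss (m := Fin p × Fin d) (lam/s) (by positivity)) ?_ ?_
    · exact (Real.continuous_exp.comp
        (((continuous_const.mul (contDiff_risk β a x y lam).continuous)).div_const s)
        ).aestronglyMeasurable
    · filter_upwards with W
      rw [Real.norm_eq_abs, Real.abs_exp]
      apply Real.exp_le_exp.mpr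
      have h2 := risk_lb a x y lam (fun t => (1 / β) * Real.log (1 + Real.exp (β * t))) W
      rw [show -(lam/s) * ‖W‖^2 = (-(lam * ‖W‖^2))/s by ring]
      rw [div_le_div_iff_of_pos_right hs]
      linarith
  · -- Villani condition
    intro s hs
    set σβ := fun t => (1 / β) * Real.log (1 + Real.exp (β * t)) with hσβ
    set CL : ℝ := ∑ q : Fin p × Fin d,
      ((1/(n:ℝ)) * ∑ i, (β * (x i q.2)^2 * |a q.1| + (a q.1)^2 * (x i q.2)^2) + lam)
      with hCL
    set G0 : EuclideanSpace ℝ (Fin p × Fin d) :=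
      (show EuclideanSpace ℝ (Fin p × Fin d) from
        WithLp.toLp 2 (fun q => (1/(n:ℝ)) * ∑ i, |a q.1| * |x i q.2|)) with hG0
    set Cg : ℝ := ‖G0‖ with hCg
    have hlap : ∀ W, lap (risk σβ a x y lam) W ≤ CL := by
      intro W
      rw [lap, hCL]
      apply Finset.sum_le_sum
      intro q _
      rw [secondPartial_risk β a x y hβ' lam W q]
      have h1 := abs_Ψ2_le β a x y hβ hy' q W
      have h2 := le_abs_self (Ψ2 β a x y q W)
      linarith
    have hgrad : ∀ W, lam * ‖W‖ - Cg ≤ ‖gradient (risk σβ a x y lam) W‖ := by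
      intro W
      rw [gradient_risk β a x y hβ' lam W]
      set V : EuclideanSpace ℝ (Fin p × Fin d) :=
        (show EuclideanSpace ℝ (Fin p × Fin d) from WithLp.toLp 2 (fun q => Ψ β a x y q W)) with hV
      have h1 : ‖V‖ ≤ Cg := euclid_norm_le V G0 (fun q => abs_Ψ_le β a x y hy' q W)
      have h2 : ‖lam • W‖ = lam * ‖W‖ := by
        rw [norm_smul, Real.norm_eq_abs, abs_of_pos hlam0]
      have h3 : ‖lam • W‖ ≤ ‖V + lam • W‖ + ‖V‖ := by
        calc ‖lam • W‖ = ‖(V + lam • W) - V‖ := by rw [add_sub_cancel_left]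
          _ ≤ ‖V + lam • W‖ + ‖V‖ := norm_sub_le _ _
      linarith
    have hmono : ∀ W : EuclideanSpace ℝ (Fin p × Fin d),
        -CL + (1/s) * (max (lam * ‖W‖ - Cg) 0)^2
          ≤ -lap (risk σβ a x y lam) W + (1/s) * ‖gradient (risk σβ a x y lam) W‖^2 := by
      intro W
      have h1 : (max (lam * ‖W‖ - Cg) 0)^2 ≤ ‖gradient (risk σβ a x y lam) W‖^2 := by
        apply pow_le_pow_left₀ (le_max_right _ 0)
        exact max_le (hgrad W) (norm_nonneg _)
      have h2 := hlap W
      have h3 : (1/s) * (max (lam * ‖W‖ - Cg) 0)^2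
          ≤ (1/s) * ‖gradient (risk σβ a x y lam) W‖^2 :=
        mul_le_mul_of_nonneg_left h1 (by positivity)
      linarith
    have htends : Filter.Tendsto (fun W : EuclideanSpace ℝ (Fin p × Fin d) =>
        -CL + (1/s) * (max (lam * ‖W‖ - Cg) 0)^2)
        (Filter.comap norm Filter.atTop) Filter.atTop := by
      have h1 : Filter.Tendsto (fun t : ℝ => lam * t - Cg) Filter.atTop Filter.atTop := by
        simp only [sub_eq_add_neg]
        exact Filter.tendsto_atTop_add_const_right _ _
          (Filter.Tendsto.const_mul_atTop hlam0 tendsto_id)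
      have h2 : Filter.Tendsto (fun t : ℝ => max (lam * t - Cg) 0) Filter.atTop Filter.atTop :=
        tendsto_atTop_mono (fun t => le_max_left _ _) h1
      have h3 : Filter.Tendsto (fun t : ℝ => (max (lam * t - Cg) 0)^2)
          Filter.atTop Filter.atTop := by
        have := h2.atTop_mul_atTop₀ h2
        simpa [pow_two] using this
      have h4 := Filter.Tendsto.const_mul_atTop (show (0:ℝ) < 1/s by positivity) h3
      have h5 := Filter.tendsto_atTop_add_const_left Filter.atTop (-CL) h4
      exact h5.comp tendsto_comap
    exact tendsto_atTop_mono hmono htends
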